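/- If a digraph H contains a circular N, then H contains either a pair of independent edges or a bicycle. -/

import Mathlib

namespace DigraphListHom

variable {V W : Type*}

/-- One step of a walk: forward if `dir = true`, backward otherwise. -/
def Step (H : V → V → Prop) (u v : V) (dir : Bool) : Prop :=
  if dir then H u v else H v u

/-- `x` is a walk in `H` with direction pattern `d`. -/
def IsWalk (H : V → V → Prop) {n : ℕ} (d : Fin n → Bool) (x : Fin (n + 1) → V) : Prop :=
  ∀ i : Fin n, Step H (x i.castSucc) (x i.succ) (d i)

/-- `x_i y_{i+1}` is a faithful edge from `X` to `Y` at position `i`. -/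
def FaithfulAt (H : V → V → Prop) {n : ℕ} (d : Fin n → Bool) (x y : Fin (n + 1) → V)
    (i : Fin n) : Prop :=
  Step H (x i.castSucc) (y i.succ) (d i)

/-- `X` avoids `Y`: there is no faithful edge from `X` to `Y`. -/
def Avoids (H : V → V → Prop) {n : ℕ} (d : Fin n → Bool) (x y : Fin (n + 1) → V) : Prop :=
  ∀ i, ¬ FaithfulAt H d x y i

/-- `Z` protects `Y` from `X`: faithful edges `x_i z_{i+1}` and `z_j y_{j+1}` imply `j ≤ i`. -/
def Protects (H : V → V → Prop) {n : ℕ} (d : Fin n → Bool) (x y z : Fin (n + 1) → V) : Prop :=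
  ∀ i j : Fin n, FaithfulAt H d x z i → FaithfulAt H d z y j → (j : ℕ) ≤ (i : ℕ)

/-- `H` contains a circular `N`: congruent walks `X` from `x` to `x`, `Y` from `y` to `y`,
`Z` from `y` to `x`, with `X` avoiding `Y` and `Z` protecting `Y` from `X`. -/
def CircularN (H : V → V → Prop) : Prop :=
  ∃ n : ℕ, 0 < n ∧ ∃ (d : Fin n → Bool) (x y z : Fin (n + 1) → V),
    IsWalk H d x ∧ IsWalk H d y ∧ IsWalk H d z ∧
    x (Fin.last n) = x 0 ∧ y (Fin.last n) = y 0 ∧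
    z 0 = y 0 ∧ z (Fin.last n) = x 0 ∧
    Avoids H d x y ∧ Protects H d x y z

/-- Arc relation of the pair digraph `H⁺` (on ambient pairs). -/
def PairArc (H : V → V → Prop) (p q : V × V) : Prop :=
  (H p.1 q.1 ∧ H p.2 q.2 ∧ ¬ H p.1 q.2) ∨ (H q.1 p.1 ∧ H q.2 p.2 ∧ ¬ H q.2 p.1)

/-- Arc relation of `H⁺` restricted to genuine vertices (pairs of distinct vertices). -/
def PairArcD (H : V → V → Prop) (p q : V × V) : Prop :=
  p.1 ≠ p.2 ∧ q.1 ≠ q.2 ∧ PairArc H p q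

/-- Reachability in `H⁺`. -/
def PairReach (H : V → V → Prop) : V × V → V × V → Prop :=
  Relation.ReflTransGen (PairArcD H)

/-- Mutual reachability in `H⁺` (same strong component). -/
def SameSCC (H : V → V → Prop) (p q : V × V) : Prop :=
  PairReach H p q ∧ PairReach H q p

/-- `C` is a strong component of the digraph with arc relation `R`. -/
def IsStrongComponent {α : Type*} (R : α → α → Prop) (C : Set α) : Prop :=
  ∃ a, C = {b | Relation.ReflTransGen R a b ∧ Relation.ReflTransGen R b a}

/-- There is a directed path with `m` vertices in the condensation of `H⁺`
ending at the strong component of `p`. -/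
def CondChain (H : V → V → Prop) (p : V × V) (m : ℕ) : Prop :=
  ∃ r : Fin m → V × V,
    (∀ i, (r i).1 ≠ (r i).2) ∧
    (∀ i j : Fin m, i < j → PairReach H (r i) (r j) ∧ ¬ PairReach H (r j) (r i)) ∧
    (∀ i, PairReach H (r i) p) ∧
    (∀ h : 0 < m, PairReach H p (r ⟨m - 1, Nat.sub_lt h Nat.one_pos⟩))

/-- `μ(p)`: the maximum number of vertices of a directed path in the condensation of `H⁺`
ending at the strong component of `p` (with `μ(x,x) = 0`). -/
noncomputable def mu (H : V → V → Prop) (p : V × V) : ℕ :=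
  sSup {m | CondChain H p m}

/-- The unordered pair `{u, v}` is `k`-allowed with respect to the ordering `ord` of `V(H⁺)`:
neither `(u,v)` nor `(v,u)` is `k`-processed (i.e. has position `> k`). -/
def KAllowed (ord : V × V → ℕ) (k : ℕ) (u v : V) : Prop :=
  u = v ∨ (ord (u, v) ≤ k ∧ ord (v, u) ≤ k)

/-- `ord` is an ordering of the vertices of `H⁺` listing the strong components
consecutively, in an order in which each component is a sink among the later ones. -/
def GoodOrd (H : V → V → Prop) (ord : V × V → ℕ) : Prop :=
  (∀ p q : V × V, p.1 ≠ p.2 → q.1 ≠ q.2 → ord p = ord q → p = q) ∧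
  (∀ p q : V × V, p.1 ≠ p.2 → q.1 ≠ q.2 → PairReach H p q → ¬ PairReach H q p →
    ord p < ord q) ∧
  (∀ p q r : V × V, p.1 ≠ p.2 → q.1 ≠ q.2 → r.1 ≠ r.2 →
    SameSCC H p q → ord p ≤ ord r → ord r ≤ ord q → SameSCC H p r)

/-- `f` is an `L`-homomorphism of `G` to `H`. -/
def IsLHom (H : V → V → Prop) (G : W → W → Prop) (L : W → Set V) (f : W → V) : Prop :=
  (∀ u v, G u v → H (f u) (f v)) ∧ ∀ w, f w ∈ L w

/-- Arc relation of the triple digraph `Tr(G,L)`. -/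
def TrArc (H : V → V → Prop) (G : W → W → Prop) (L : W → Set V)
    (p q : W × V × V) : Prop :=
  p.2.1 ∈ L p.1 ∧ p.2.2 ∈ L p.1 ∧ q.2.1 ∈ L q.1 ∧ q.2.2 ∈ L q.1 ∧
  G p.1 q.1 ∧ H p.2.1 q.2.1 ∧ H p.2.2 q.2.2 ∧ ¬ H p.2.1 q.2.2 ∧ ¬ H p.2.2 q.2.1

/-- Symmetrization of the triple-digraph arc relation (for weak connectivity). -/
def TrSym (H : V → V → Prop) (G : W → W → Prop) (L : W → Set V)
    (p q : W × V × V) : Prop :=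
  TrArc H G L p q ∨ TrArc H G L q p

/-- Weak connectivity in the triple digraph `Tr(G,L)`. -/
def WConn (H : V → V → Prop) (G : W → W → Prop) (L : W → Set V) :
    W × V × V → W × V × V → Prop :=
  Relation.ReflTransGen (TrSym H G L)

/-- `f` is a ternary polymorphism of `H`. -/
def Polymorphism3 (H : V → V → Prop) (f : V → V → V → V) : Prop :=
  ∀ a a' b b' c c', H a a' → H b b' → H c c' → H (f a b c) (f a' b' c')

/-- `f` is conservative. -/
def Conservative3 (f : V → V → V → V) : Prop :=
  ∀ a b c, f a b c = a ∨ f a b c = b ∨ f a b c = c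

/-- `f 1, …, f k` satisfy the Hagemann–Mitschke identities. -/
def HMChain (f : ℕ → V → V → V → V) (k : ℕ) : Prop :=
  (∀ x y, f 1 x y y = x) ∧
  (∀ i, 1 ≤ i → i < k → ∀ x y, f i x x y = f (i + 1) x y y) ∧
  (∀ x y, f k x x y = y)

/-- `H` contains a pair of independent edges. -/
def IndependentEdges (H : V → V → Prop) : Prop :=
  ∃ a b c d, H a b ∧ H c d ∧ ¬ H a d ∧ ¬ H c b

/-- `H` contains a bicycle. -/
def Bicycle (H : V → V → Prop) : Prop :=
  ∃ n : ℕ, 0 < n ∧ ∃ x y : Fin (n + 1) → V,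
    x (Fin.last n) = x 0 ∧ y (Fin.last n) = y 0 ∧
    ∀ i : Fin n, H (x i.castSucc) (x i.succ) ∧ H (y i.castSucc) (y i.succ) ∧
      ¬ H (x i.castSucc) (y i.succ) ∧ H (y i.castSucc) (x i.succ)

/-- `a` is an `i`-distinguisher of `a, b, c`. -/
def IDist (H : V → V → Prop) (i : ℕ) (a b c : V) : Prop :=
  ∃ (n : ℕ) (d : Fin n → Bool) (X Y Z : Fin (n + 1) → V),
    IsWalk H d X ∧ IsWalk H d Y ∧ IsWalk H d Z ∧
    X 0 = a ∧ Y 0 = b ∧ Z 0 = c ∧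
    Y (Fin.last n) = Z (Fin.last n) ∧
    i ≤ mu H (X (Fin.last n), Y (Fin.last n)) ∧
    Avoids H d Y X ∧ Avoids H d Z X

/-!
Without independent edges, two congruent walks `X` avoiding `Y` cannot make a backward step
followed by a forward step: the backward edge of `X` and the forward edge of `Y` would be
independent, since either connecting edge is a faithful edge from `X` to `Y`. For closed walks
this holds cyclically, so all steps point the same way. Forward walks form a bicycle; backward
ones do after reversing both walks and exchanging them.
-/

open Fin.NatCast in
lemma Fin.forall_of_add_one_closed {m : ℕ} {P : Fin (m + 1) → Prop} {i : Fin (m + 1)}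
    (hi : P i) (hP : ∀ j, P j → P (j + 1)) (j : Fin (m + 1)) : P j := by
  have hiter : ∀ k : ℕ, P (i + (k : Fin (m + 1))) := by
    intro k
    induction k with
    | zero => simpa using hi
    | succ k ih => simpa [Nat.cast_succ, ← add_assoc] using hP _ ih
  simpa using hiter (j - i).val

lemma apply_succ_eq_apply_castSucc_add_one {m : ℕ} {x : Fin (m + 2) → V}
    (hx : x (Fin.last (m + 1)) = x 0) (j : Fin (m + 1)) : x j.succ = x (j + 1).castSucc := by
  rcases Fin.eq_castSucc_or_eq_last j with ⟨k, rfl⟩ | rfl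
  · rw [Fin.coeSucc_eq_succ, Fin.succ_castSucc]
  · simpa [Fin.last_add_one] using hx

@[simp]
lemma step_not (H : V → V → Prop) (u v : V) (b : Bool) : Step H u v (!b) ↔ Step H v u b := by
  cases b <;> rfl

lemma IsWalk.reverse {H : V → V → Prop} {n : ℕ} {d : Fin n → Bool} {x : Fin (n + 1) → V}
    (hx : IsWalk H d x) : IsWalk H (fun i => !d i.rev) (x ∘ Fin.rev) := by
  intro i
  simpa [Fin.rev_castSucc, Fin.rev_succ] using hx i.rev

lemma Avoids.reverse {H : V → V → Prop} {n : ℕ} {d : Fin n → Bool} {x y : Fin (n + 1) → V}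
    (hxy : Avoids H d x y) : Avoids H (fun i => !d i.rev) (y ∘ Fin.rev) (x ∘ Fin.rev) := by
  intro i
  simpa [FaithfulAt, Fin.rev_castSucc, Fin.rev_succ] using hxy i.rev

lemma bicycle_of_forward {H : V → V → Prop} (hI : ¬ IndependentEdges H) {n : ℕ} (hn : 0 < n)
    {d : Fin n → Bool} (hd : ∀ i, d i = true) {x y : Fin (n + 1) → V}
    (hX : IsWalk H d x) (hY : IsWalk H d y) (hxy : Avoids H d x y)
    (hx : x (Fin.last n) = x 0) (hy : y (Fin.last n) = y 0) : Bicycle H := by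
  refine ⟨n, hn, x, y, hx, hy, fun i => ?_⟩
  have hXi : H (x i.castSucc) (x i.succ) := by simpa [Step, hd i] using hX i
  have hYi : H (y i.castSucc) (y i.succ) := by simpa [Step, hd i] using hY i
  have hxyi : ¬ H (x i.castSucc) (y i.succ) := by simpa [FaithfulAt, Step, hd i] using hxy i
  refine ⟨hXi, hYi, hxyi, ?_⟩
  by_contra hyx
  exact hI ⟨_, _, _, _, hYi, hXi, hyx, hxyi⟩

lemma dir_add_one_eq_false_of_avoids {H : V → V → Prop} (hI : ¬ IndependentEdges H) {m : ℕ}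
    {d : Fin (m + 1) → Bool} {x y : Fin (m + 2) → V}
    (hX : IsWalk H d x) (hY : IsWalk H d y) (hxy : Avoids H d x y)
    (hx : x (Fin.last (m + 1)) = x 0) (hy : y (Fin.last (m + 1)) = y 0)
    {j : Fin (m + 1)} (hj : d j = false) : d (j + 1) = false := by
  by_contra hk
  rw [Bool.not_eq_false] at hk
  have hXj : H (x (j + 1).castSucc) (x j.castSucc) := by
    simpa [Step, hj, apply_succ_eq_apply_castSucc_add_one hx] using hX j
  have hYk : H (y (j + 1).castSucc) (y (j + 1).succ) := by simpa [Step, hk] using hY (j + 1)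
  have hxyj : ¬ H (y (j + 1).castSucc) (x j.castSucc) := by
    simpa [FaithfulAt, Step, hj, apply_succ_eq_apply_castSucc_add_one hy] using hxy j
  have hxyk : ¬ H (x (j + 1).castSucc) (y (j + 1).succ) := by
    simpa [FaithfulAt, Step, hk] using hxy (j + 1)
  exact hI ⟨_, _, _, _, hXj, hYk, hxyk, hxyj⟩

/-- a circular `N` yields independent edges or a bicycle. -/
theorem statement13 (H : V → V → Prop) (hH : CircularN H) :
    IndependentEdges H ∨ Bicycle H := by
  rw [or_iff_not_imp_left]
  intro hI
  obtain ⟨n, hn, d, x, y, -, hX, hY, -, hx, hy, -, -, hxy, -⟩ := hH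
  obtain ⟨m, rfl⟩ : ∃ m, n = m + 1 := ⟨n - 1, by omega⟩
  by_cases hd : ∀ i, d i = true
  · exact bicycle_of_forward hI hn hd hX hY hxy hx hy
  · obtain ⟨i, hi⟩ := not_forall.mp hd
    have hback : ∀ j, d j = false :=
      Fin.forall_of_add_one_closed (Bool.not_eq_true _ ▸ hi)
        (fun j => dir_add_one_eq_false_of_avoids hI hX hY hxy hx hy)
    exact bicycle_of_forward hI hn (by simp [hback]) hY.reverse hX.reverse hxy.reverse
      (by simp [hy]) (by simp [hx])

end DigraphListHom
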